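/- arXiv:1103.1408 — 5 statements merged into one kernel-verified Lean document; each statement's English description precedes it below -/
import Mathlib

section
/- For all α, β, γ, δ ∈ ℝ and all a₀, a₁ ∈ ℝ with a₀ ≠ 0 and a₀² ≠ 1, there exists exactly one formal power series y ∈ ℝ[[X]] with coeff₀(y) = a₀ and coeff₁(y) = a₁ satisfying the shifted PVI equation E(X − 1, y, Dy, D(Dy)) = 0 in ℝ[[X]]. -/
/-!
Write `y = ∑ aₖ Xᵏ`. Modulo `X ^ (n + 1)`, the series `y` and `Dy` only involve `a₀, …, aₙ₊₁`,
and `E(x, y, p, q)` is affine in `q` with `q`-coefficient `2x²y(x-1)²(y-1)(y-x)`, whose constant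
term at `x = X - 1` is `8a₀(a₀² - 1)`. Hence the coefficient of `Xⁿ` in `E(X - 1, y, Dy, D²y)` is
`8a₀(a₀² - 1)(n + 1)(n + 2)·aₙ₊₂` plus an expression in `a₀, …, aₙ₊₁`. As the factor is nonzero,
the equation determines `aₙ₊₂` from the earlier coefficients, so `a₀, a₁` fix exactly one solution.
-/

/-- Formal derivative of a power series, defined coefficientwise:
the coefficient of `X^n` in `D f` is `(n+1) * coeff (n+1) f`. -/
noncomputable def D (f : PowerSeries ℝ) : PowerSeries ℝ :=
  PowerSeries.mk fun n => ((n : ℝ) + 1) * PowerSeries.coeff (n + 1) f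

/-- The Painlevé VI expression `E(X - 1, y, Dy, D(Dy))`, i.e. PVI shifted to be
centered at `x = -1`, as a formal power series. -/
noncomputable def Esh (α β γ δ : ℝ) (y : PowerSeries ℝ) : PowerSeries ℝ :=
  let x : PowerSeries ℝ := PowerSeries.X - 1
  let p : PowerSeries ℝ := D y
  let q : PowerSeries ℝ := D (D y)
  2*x^2*y*(x-1)^2*(y-1)*(y-x)*q
    - x^2*(x-1)^2*(3*y^2 - 2*(1+x)*y + x)*p^2
    + 2*x*y*(x-1)*(y-1)*((2*x-1)*y + x^2)*p
    - 2*(PowerSeries.C α * y^2*(y-1)^2*(y-x)^2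
        + PowerSeries.C β * x*(y-1)^2*(y-x)^2
        + PowerSeries.C γ * y^2*(x-1)*(y-x)^2
        + PowerSeries.C δ * x*y^2*(x-1)*(y-1)^2)

open PowerSeries

namespace PowerSeries

variable {R : Type*}

theorem coeff_mul_of_coeff_lt_eq_zero [CommSemiring R] {f g : R⟦X⟧} {n : ℕ}
    (hg : ∀ k < n, coeff k g = 0) : coeff n (f * g) = constantCoeff f * coeff n g := by
  obtain ⟨h, rfl⟩ := X_pow_dvd_iff.mpr hg
  simp only [mul_left_comm f, coeff_X_pow_mul', le_refl, if_true, Nat.sub_self,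
    coeff_zero_eq_constantCoeff_apply, map_mul]

theorem mk_span_X_pow_eq_mk_iff [CommRing R] {f g : R⟦X⟧} {m : ℕ} :
    Ideal.Quotient.mk (Ideal.span {X ^ m}) f = Ideal.Quotient.mk _ g ↔
      ∀ k < m, coeff k f = coeff k g := by
  simp only [Ideal.Quotient.mk_eq_mk_iff_sub_mem, Ideal.mem_span_singleton, X_pow_dvd_iff,
    map_sub, sub_eq_zero]

end PowerSeries

def painleveE {R : Type*} [CommRing R] (α β γ δ x y p q : R) : R :=
  2*x^2*y*(x-1)^2*(y-1)*(y-x)*q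
    - x^2*(x-1)^2*(3*y^2 - 2*(1+x)*y + x)*p^2
    + 2*x*y*(x-1)*(y-1)*((2*x-1)*y + x^2)*p
    - 2*(α * y^2*(y-1)^2*(y-x)^2
        + β * x*(y-1)^2*(y-x)^2
        + γ * y^2*(x-1)*(y-x)^2
        + δ * x*y^2*(x-1)*(y-1)^2)

section painleveE

variable {R S : Type*} [CommRing R] [CommRing S]

theorem map_painleveE (f : R →+* S) (α β γ δ x y p q : R) :
    f (painleveE α β γ δ x y p q) =
      painleveE (f α) (f β) (f γ) (f δ) (f x) (f y) (f p) (f q) := by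
  simp only [painleveE, map_sub, map_add, map_mul, map_pow, map_ofNat, map_one]

theorem painleveE_sub_painleveE (α β γ δ x y p q q' : R) :
    painleveE α β γ δ x y p q' - painleveE α β γ δ x y p q =
      2*x^2*y*(x-1)^2*(y-1)*(y-x) * (q' - q) := by
  unfold painleveE
  ring

end painleveE

theorem Esh_eq_painleveE (α β γ δ : ℝ) (y : ℝ⟦X⟧) :
    Esh α β γ δ y = painleveE (C α) (C β) (C γ) (C δ) (X - 1) y (D y) (D (D y)) := rfl

theorem coeff_D (f : ℝ⟦X⟧) (n : ℕ) : coeff n (D f) = ((n : ℝ) + 1) * coeff (n + 1) f :=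
  coeff_mk n _

theorem coeff_D_D (f : ℝ⟦X⟧) (n : ℕ) :
    coeff n (D (D f)) = ((n : ℝ) + 1) * ((n : ℝ) + 2) * coeff (n + 2) f := by
  rw [coeff_D, coeff_D]
  push_cast
  ring

def pviPivot (a : ℝ) (n : ℕ) : ℝ :=
  8 * a * (a ^ 2 - 1) * ((n : ℝ) + 1) * ((n : ℝ) + 2)

theorem pviPivot_ne_zero {a : ℝ} (h₀ : a ≠ 0) (h₁ : a ^ 2 ≠ 1) (n : ℕ) : pviPivot a n ≠ 0 := by
  have : a ^ 2 - 1 ≠ 0 := sub_ne_zero.mpr h₁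
  unfold pviPivot
  positivity

theorem coeff_Esh_sub_coeff_Esh (α β γ δ : ℝ) {y z : ℝ⟦X⟧} {n : ℕ}
    (h : ∀ k < n + 2, coeff k y = coeff k z) :
    coeff n (Esh α β γ δ y) - coeff n (Esh α β γ δ z) =
      pviPivot (coeff 0 z) n * (coeff (n + 2) y - coeff (n + 2) z) := by
  set π := Ideal.Quotient.mk (Ideal.span {(X : ℝ⟦X⟧) ^ (n + 1)})
  have hy : π y = π z := mk_span_X_pow_eq_mk_iff.mpr fun k hk => h k (by omega)
  have hDy : π (D y) = π (D z) := mk_span_X_pow_eq_mk_iff.mpr fun k hk => by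
    rw [coeff_D, coeff_D, h (k + 1) (by omega)]
  have hE : coeff n (Esh α β γ δ y) =
      coeff n (painleveE (C α) (C β) (C γ) (C δ) (X - 1) z (D z) (D (D y))) := by
    refine mk_span_X_pow_eq_mk_iff.mp ?_ n n.lt_succ_self
    simp only [π, Esh_eq_painleveE, map_painleveE, hy, hDy]
  have hDD (k : ℕ) : coeff k (D (D y) - D (D z)) =
      ((k : ℝ) + 1) * ((k : ℝ) + 2) * (coeff (k + 2) y - coeff (k + 2) z) := by
    rw [map_sub, coeff_D_D, coeff_D_D]
    ring
  rw [hE, ← map_sub, Esh_eq_painleveE, painleveE_sub_painleveE,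
    coeff_mul_of_coeff_lt_eq_zero fun k hk => by rw [hDD, h (k + 2) (by omega), sub_self, mul_zero],
    hDD]
  simp only [pviPivot, coeff_zero_eq_constantCoeff_apply, map_mul, map_sub, map_pow, map_ofNat,
    map_one, constantCoeff_X]
  ring

theorem eq_of_Esh_eq_zero {α β γ δ : ℝ} {y z : ℝ⟦X⟧} (h₀ : coeff 0 z ≠ 0)
    (h₁ : coeff 0 z ^ 2 ≠ 1) (hy : Esh α β γ δ y = 0) (hz : Esh α β γ δ z = 0)
    (h01 : ∀ k < 2, coeff k y = coeff k z) : y = z := by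
  suffices H : ∀ n, ∀ k < n + 2, coeff k y = coeff k z from ext fun n => H n n (by omega)
  intro n
  induction n with
  | zero => exact h01
  | succ n ih =>
    have key := coeff_Esh_sub_coeff_Esh α β γ δ ih
    rw [hy, hz, map_zero, sub_zero, eq_comm, mul_eq_zero, sub_eq_zero] at key
    have hnext := key.resolve_left (pviPivot_ne_zero h₀ h₁ n)
    intro k hk
    rcases (by omega : k < n + 2 ∨ k = n + 2) with hk | rfl
    exacts [ih k hk, hnext]

/-- Coefficient `n + 2` cancels `coeff n` of `Esh α β γ δ` at the truncation below degree `n + 2`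
(see `coeff_Esh_sub_coeff_Esh`). -/
noncomputable def pviCoeff (α β γ δ a₀ a₁ : ℝ) : ℕ → ℝ
  | 0 => a₀
  | 1 => a₁
  | n + 2 =>
    -coeff n (Esh α β γ δ (mk fun k => if _ : k < n + 2 then pviCoeff α β γ δ a₀ a₁ k else 0)) /
      pviPivot a₀ n

theorem Esh_mk_pviCoeff {α β γ δ a₀ : ℝ} (a₁ : ℝ) (h₀ : a₀ ≠ 0) (h₁ : a₀ ^ 2 ≠ 1) :
    Esh α β γ δ (mk (pviCoeff α β γ δ a₀ a₁)) = 0 := by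
  ext n
  set z : ℝ⟦X⟧ := mk fun k => if _ : k < n + 2 then pviCoeff α β γ δ a₀ a₁ k else 0
  have key := coeff_Esh_sub_coeff_Esh α β γ δ (y := mk (pviCoeff α β γ δ a₀ a₁)) (z := z) (n := n)
    fun k hk => by simp [z, hk]
  have hz0 : coeff 0 z = a₀ := by simp [z, pviCoeff]
  have hz2 : coeff (n + 2) z = 0 := by simp [z]
  rw [hz0, hz2, coeff_mk, pviCoeff, sub_zero, mul_div_cancel₀ _ (pviPivot_ne_zero h₀ h₁ n)] at key
  rw [map_zero]
  linear_combination key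

theorem shifted_PVI_existsUnique (α β γ δ a₀ a₁ : ℝ) (h₀ : a₀ ≠ 0) (h₁ : a₀ ^ 2 ≠ 1) :
    ∃! y : PowerSeries ℝ,
      PowerSeries.coeff 0 y = a₀ ∧ PowerSeries.coeff 1 y = a₁ ∧
        Esh α β γ δ y = 0 := by
  set s := mk (pviCoeff α β γ δ a₀ a₁)
  have hs0 : coeff 0 s = a₀ := by simp [s, pviCoeff]
  have hs1 : coeff 1 s = a₁ := by simp [s, pviCoeff]
  have hs : Esh α β γ δ s = 0 := Esh_mk_pviCoeff a₁ h₀ h₁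
  refine ⟨s, ⟨hs0, hs1, hs⟩, fun y ⟨hy0, hy1, hy⟩ => ?_⟩
  refine eq_of_Esh_eq_zero (hs0 ▸ h₀) (hs0 ▸ h₁) hy hs fun k hk => ?_
  interval_cases k
  exacts [hy0.trans hs0.symm, hy1.trans hs1.symm]
end

section
/- Prandtl's boundary-layer momentum equation u·∂ₓu + v·∂_yu + ∂_tu = ∂_tS(Û) + S(Û)·∂ₓS(Û) + ν·∂_y∂_yu holds in MvPowerSeries (Fin 3) ℝ if and only if for all i,k ∈ ℕ the following three families of equations hold: (j = 0): 0 = (k+1)·U(i,k+1) + Σ_{p=0}^{i} Σ_{q=0}^{k} (i−p+1)·U(p,q)·U(i−p+1,k−q) + 2ν·A(i,2,k); (j = 1): (k+1)·A(i,1,k+1) + Σ_{p=0}^{i} Σ_{r=0}^{k} B(p,1,r)·A(i−p,1,k−r) = 6ν·A(i,3,k); and for every j ≥ 2: (k+1)·A(i,j,k+1) + Σ_{p=0}^{i} Σ_{q=1}^{j−1} Σ_{r=0}^{k} (i−p+1)·A(p,q,r)·A(i−p+1,j−q,k−r) + Σ_{p=0}^{i} Σ_{q=1}^{j} Σ_{r=0}^{k}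 (j−q+1)·B(p,q,r)·A(i−p,j−q+1,k−r) = ν·(j+1)(j+2)·A(i,j+2,k). -/
/-- `S A` is the formal power series in the three variables x, y, t whose coefficient of
`x^i y^j t^k` is `A i j k`. -/
noncomputable def S (A : ℕ → ℕ → ℕ → ℝ) : MvPowerSeries (Fin 3) ℝ :=
  fun m => A (m 0) (m 1) (m 2)

/-- The family of coefficients of the formal partial derivative in x. -/
noncomputable def dx (A : ℕ → ℕ → ℕ → ℝ) : ℕ → ℕ → ℕ → ℝ :=
  fun i j k => ((i : ℝ) + 1) * A (i + 1) j k

/-- The family of coefficients of the formal partial derivative in y. -/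
noncomputable def dy (A : ℕ → ℕ → ℕ → ℝ) : ℕ → ℕ → ℕ → ℝ :=
  fun i j k => ((j : ℝ) + 1) * A i (j + 1) k

/-- The family of coefficients of the formal partial derivative in t. -/
noncomputable def dt (A : ℕ → ℕ → ℕ → ℝ) : ℕ → ℕ → ℕ → ℝ :=
  fun i j k => ((k : ℝ) + 1) * A i j (k + 1)

/-- The external-flow coefficient family `Û`, with `Û i 0 k = U i k` and `Û i j k = 0`
for `j ≥ 1`. -/
noncomputable def Uhat (U : ℕ → ℕ → ℝ) : ℕ → ℕ → ℕ → ℝ :=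
  fun i j k => if j = 0 then U i k else 0

/-!
Both sides are compared coefficient by coefficient. The coefficient of `x^i y^j t^k` in a
product `S A * S B` is the Cauchy sum over `p ≤ i`, `q ≤ j`, `r ≤ k`. Because `A` and `B` vanish
on `y = 0`, the terms `q = 0` drop out of the sums, and in `u ∂ₓu` so does `q = j`; this is where
the ranges `Icc 1 (j - 1)` and `Icc 1 j` come from. The external flow `Û` does not depend on `y`,
so its terms only appear at `j = 0`, and `∂_t u` vanishes there. Splitting `j` into `0`, `1` and
`j ≥ 2` gives the three families.
-/

open Finset MvPowerSeries

noncomputable def ofTriple (i j k : ℕ) : Fin 3 →₀ ℕ := Finsupp.equivFunOnFinite.symm ![i, j, k]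

@[simp] theorem ofTriple_apply_zero (i j k : ℕ) : ofTriple i j k 0 = i := rfl
@[simp] theorem ofTriple_apply_one (i j k : ℕ) : ofTriple i j k 1 = j := rfl
@[simp] theorem ofTriple_apply_two (i j k : ℕ) : ofTriple i j k 2 = k := rfl

theorem eq_ofTriple_iff {a : Fin 3 →₀ ℕ} {i j k : ℕ} :
    a = ofTriple i j k ↔ a 0 = i ∧ a 1 = j ∧ a 2 = k := by
  simp [Finsupp.ext_iff, Fin.forall_fin_succ, ofTriple]

theorem eq_ofTriple_apply (a : Fin 3 →₀ ℕ) : a = ofTriple (a 0) (a 1) (a 2) :=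
  eq_ofTriple_iff.2 ⟨rfl, rfl, rfl⟩

theorem mem_antidiagonal_ofTriple {a : (Fin 3 →₀ ℕ) × (Fin 3 →₀ ℕ)} {i j k : ℕ} :
    a ∈ antidiagonal (ofTriple i j k) ↔
      a.1 0 + a.2 0 = i ∧ a.1 1 + a.2 1 = j ∧ a.1 2 + a.2 2 = k := by
  rw [HasAntidiagonal.mem_antidiagonal, eq_ofTriple_iff]; rfl

theorem MvPowerSeries.ext_ofTriple_iff {R : Type*} [Semiring R] {φ ψ : MvPowerSeries (Fin 3) R} :
    φ = ψ ↔ ∀ i j k, coeff (ofTriple i j k) φ = coeff (ofTriple i j k) ψ :=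
  ⟨fun h _ _ _ => h ▸ rfl, fun h => ext fun a => eq_ofTriple_apply a ▸ h _ _ _⟩

theorem coeff_ofTriple_S (A : ℕ → ℕ → ℕ → ℝ) (i j k : ℕ) :
    coeff (ofTriple i j k) (S A) = A i j k := rfl

theorem coeff_ofTriple_S_mul (A B : ℕ → ℕ → ℕ → ℝ) (i j k : ℕ) :
    coeff (ofTriple i j k) (S A * S B) =
      ∑ p ∈ range (i + 1), ∑ q ∈ range (j + 1), ∑ r ∈ range (k + 1),
        A p q r * B (i - p) (j - q) (k - r) := by
  rw [coeff_mul]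
  simp_rw [← sum_product' (range (j + 1)), ← sum_product' (range (i + 1))]
  refine sum_nbij' (fun a => (a.1 0, a.1 1, a.1 2))
    (fun x => (ofTriple x.1 x.2.1 x.2.2, ofTriple (i - x.1) (j - x.2.1) (k - x.2.2)))
    ?_ ?_ ?_ ?_ ?_
  · intro a ha
    rw [mem_antidiagonal_ofTriple] at ha
    simp only [mem_product, mem_range]
    omega
  · intro x hx
    simp only [mem_product, mem_range] at hx
    rw [mem_antidiagonal_ofTriple]
    simp only [ofTriple_apply_zero, ofTriple_apply_one, ofTriple_apply_two]
    omega
  · intro a ha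
    rw [mem_antidiagonal_ofTriple] at ha
    dsimp only
    exact Prod.ext (eq_ofTriple_apply a.1).symm
      (eq_ofTriple_iff.2 ⟨by omega, by omega, by omega⟩).symm
  · exact fun _ _ => rfl
  · intro a ha
    rw [mem_antidiagonal_ofTriple] at ha
    change A (a.1 0) (a.1 1) (a.1 2) * B (a.2 0) (a.2 1) (a.2 2) = _
    dsimp only
    congr 2 <;> omega

theorem sum_range_succ_eq_sum_Icc_one {M : Type*} [AddCommMonoid M] {f : ℕ → M} (h0 : f 0 = 0)
    (j : ℕ) : ∑ q ∈ range (j + 1), f q = ∑ q ∈ Icc 1 j, f q := by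
  refine (sum_subset (fun q hq => ?_) (fun q hq hq' => ?_)).symm
  · rw [mem_Icc] at hq; rw [mem_range]; omega
  · rw [mem_range] at hq; rw [mem_Icc] at hq'
    obtain rfl : q = 0 := by omega
    exact h0

theorem sum_range_succ_eq_sum_Icc_one_pred {M : Type*} [AddCommMonoid M] {f : ℕ → M} {j : ℕ}
    (h0 : f 0 = 0) (hj : f j = 0) : ∑ q ∈ range (j + 1), f q = ∑ q ∈ Icc 1 (j - 1), f q := by
  refine (sum_subset (fun q hq => ?_) (fun q hq hq' => ?_)).symm
  · rw [mem_Icc] at hq; rw [mem_range]; omega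
  · rw [mem_range] at hq; rw [mem_Icc] at hq'
    obtain rfl | rfl : q = 0 ∨ q = j := by omega
    exacts [h0, hj]

theorem coeff_ofTriple_S_mul_S_dx {A C : ℕ → ℕ → ℕ → ℝ} (hA : ∀ i k, A i 0 k = 0)
    (hC : ∀ i k, C i 0 k = 0) (i j k : ℕ) :
    coeff (ofTriple i j k) (S A * S (dx C)) =
      ∑ p ∈ range (i + 1), ∑ q ∈ Icc 1 (j - 1), ∑ r ∈ range (k + 1),
        ((i - p + 1 : ℕ) : ℝ) * A p q r * C (i - p + 1) (j - q) (k - r) := by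
  rw [coeff_ofTriple_S_mul]
  refine sum_congr rfl fun p _ => ?_
  rw [sum_range_succ_eq_sum_Icc_one_pred (by simp [hA]) (by simp [dx, hC])]
  refine sum_congr rfl fun q _ => sum_congr rfl fun r _ => ?_
  simp only [dx]; push_cast; ring

theorem coeff_ofTriple_S_mul_S_dy {B : ℕ → ℕ → ℕ → ℝ} (hB : ∀ i k, B i 0 k = 0)
    (A : ℕ → ℕ → ℕ → ℝ) (i j k : ℕ) :
    coeff (ofTriple i j k) (S B * S (dy A)) =
      ∑ p ∈ range (i + 1), ∑ q ∈ Icc 1 j, ∑ r ∈ range (k + 1),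
        ((j - q + 1 : ℕ) : ℝ) * B p q r * A (i - p) (j - q + 1) (k - r) := by
  rw [coeff_ofTriple_S_mul]
  refine sum_congr rfl fun p _ => ?_
  rw [sum_range_succ_eq_sum_Icc_one (by simp [hB])]
  refine sum_congr rfl fun q _ => sum_congr rfl fun r _ => ?_
  simp only [dy]; push_cast; ring

theorem coeff_ofTriple_S_Uhat_mul_S_dx_Uhat (U : ℕ → ℕ → ℝ) (i j k : ℕ) :
    coeff (ofTriple i j k) (S (Uhat U) * S (dx (Uhat U))) =
      if j = 0 then
        ∑ p ∈ range (i + 1), ∑ q ∈ range (k + 1),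
          ((i - p + 1 : ℕ) : ℝ) * U p q * U (i - p + 1) (k - q)
      else 0 := by
  rw [coeff_ofTriple_S_mul]
  split_ifs with hj
  · subst hj
    simp only [zero_add, sum_range_one, Uhat, dx, if_true]
    refine sum_congr rfl fun p _ => sum_congr rfl fun q _ => ?_
    push_cast; ring
  · refine sum_eq_zero fun p _ => sum_eq_zero fun q _ => sum_eq_zero fun r _ => ?_
    by_cases hq0 : q = 0 <;> simp [Uhat, dx, hq0, hj]

theorem Nat.forall_iff_zero_one_forall_two_le {P : ℕ → Prop} :
    (∀ j, P j) ↔ P 0 ∧ P 1 ∧ ∀ j, 2 ≤ j → P j :=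
  ⟨fun h => ⟨h 0, h 1, fun j _ => h j⟩, fun ⟨h0, h1, h⟩ j =>
    match j with
    | 0 => h0
    | 1 => h1
    | j + 2 => h _ (by omega)⟩

theorem prandtl_momentum_iff (ν : ℝ) (U : ℕ → ℕ → ℝ) (A B : ℕ → ℕ → ℕ → ℝ)
    (hA : ∀ i k : ℕ, A i 0 k = 0) (hB : ∀ i k : ℕ, B i 0 k = 0) :
    (S A * S (dx A) + S B * S (dy A) + S (dt A) =
        S (dt (Uhat U)) + S (Uhat U) * S (dx (Uhat U)) + ν • S (dy (dy A))) ↔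
      ∀ i k : ℕ,
        ((0 : ℝ) = ((k : ℝ) + 1) * U i (k + 1)
            + (∑ p ∈ Finset.range (i + 1), ∑ q ∈ Finset.range (k + 1),
                ((i - p + 1 : ℕ) : ℝ) * U p q * U (i - p + 1) (k - q))
            + 2 * ν * A i 2 k) ∧
        (((k : ℝ) + 1) * A i 1 (k + 1)
            + (∑ p ∈ Finset.range (i + 1), ∑ r ∈ Finset.range (k + 1),
                B p 1 r * A (i - p) 1 (k - r)) =
          6 * ν * A i 3 k) ∧
        (∀ j : ℕ, 2 ≤ j →
          ((k : ℝ) + 1) * A i j (k + 1)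
            + (∑ p ∈ Finset.range (i + 1), ∑ q ∈ Finset.Icc 1 (j - 1),
                ∑ r ∈ Finset.range (k + 1),
                ((i - p + 1 : ℕ) : ℝ) * A p q r * A (i - p + 1) (j - q) (k - r))
            + (∑ p ∈ Finset.range (i + 1), ∑ q ∈ Finset.Icc 1 j,
                ∑ r ∈ Finset.range (k + 1),
                ((j - q + 1 : ℕ) : ℝ) * B p q r * A (i - p) (j - q + 1) (k - r)) =
          ν * ((j : ℝ) + 1) * ((j : ℝ) + 2) * A i (j + 2) k) := by
  rw [MvPowerSeries.ext_ofTriple_iff]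
  simp only [map_add, coeff_smul, coeff_ofTriple_S, coeff_ofTriple_S_mul_S_dx hA hA,
    coeff_ofTriple_S_mul_S_dy hB, coeff_ofTriple_S_Uhat_mul_S_dx_Uhat, dt, dy, Uhat]
  refine forall_congr' fun i => forall_comm.trans (forall_congr' fun k => ?_)
  rw [Nat.forall_iff_zero_one_forall_two_le]
  refine and_congr ?_ (and_congr ?_ (forall₂_congr fun j hj => ?_))
  · simp only [zero_tsub, Order.lt_one_iff, Icc_eq_empty_of_lt, Nat.cast_add, Nat.cast_one, hA,
      mul_zero, sum_const_zero, zero_add, one_mul, sum_empty, add_zero, ↓reduceIte,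
      CharP.cast_eq_zero, Nat.reduceAdd]
    constructor <;> intro h <;> linarith
  · simp only [tsub_self, Order.lt_one_iff, Icc_eq_empty_of_lt, Nat.cast_add, Nat.cast_one,
      sum_empty, sum_const_zero, Icc_self, sum_singleton, CharP.cast_eq_zero, zero_add, one_mul,
      one_ne_zero, ↓reduceIte, mul_zero, add_zero, Nat.reduceAdd, Nat.cast_ofNat]
    constructor <;> intro h <;> linarith
  · simp only [Nat.cast_add, Nat.cast_one, show j ≠ 0 by omega, ↓reduceIte, mul_zero, add_zero,
      zero_add]
    constructor <;> intro h <;> linarith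
end

section
/- Suppose ν ≠ 0 and u = S(A), v = S(B) satisfy both Prandtl's boundary-layer momentum equation u·∂ₓu + v·∂_yu + ∂_tu = ∂_tS(Û) + S(Û)·∂ₓS(Û) + ν·∂_y∂_yu and the continuity equation ∂ₓu + ∂_yv = 0 in MvPowerSeries (Fin 3) ℝ. Then for all i,k ∈ ℕ: A(i,3,k) = (k+1)·A(i,1,k+1)/(6ν). -/
open MvPowerSeries

noncomputable abbrev exponent (i j k : ℕ) : Fin 3 →₀ ℕ :=
  Finsupp.equivFunOnFinite.symm ![i, j, k]

@[simp]
lemma coeff_exponent_S (A : ℕ → ℕ → ℕ → ℝ) (i j k : ℕ) :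
    coeff (exponent i j k) (S A) = A i j k :=
  rfl

lemma coeff_exponent_y_one_S_mul_S_eq_zero (f g : ℕ → ℕ → ℕ → ℝ) (i k : ℕ)
    (h01 : ∀ a b c d, f a 0 c * g b 1 d = 0) (h10 : ∀ a b c d, f a 1 c * g b 0 d = 0) :
    coeff (exponent i 1 k) (S f * S g) = 0 := by
  rw [coeff_mul]
  refine Finset.sum_eq_zero fun pq hpq => ?_
  have hy : pq.1 1 + pq.2 1 = 1 := by
    simpa using DFunLike.congr_fun (Finset.HasAntidiagonal.mem_antidiagonal.mp hpq) 1
  change f _ (pq.1 1) _ * g _ (pq.2 1) _ = 0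
  rcases Nat.add_eq_one_iff.mp hy with ⟨h1, h2⟩ | ⟨h1, h2⟩
  · rw [h1, h2]; exact h01 ..
  · rw [h1, h2]; exact h10 ..

theorem prandtl_A_i_three_k (ν : ℝ) (hν : ν ≠ 0) (U : ℕ → ℕ → ℝ)
    (A B : ℕ → ℕ → ℕ → ℝ)
    (hA : ∀ i k : ℕ, A i 0 k = 0) (hB : ∀ i k : ℕ, B i 0 k = 0)
    (hmom : S A * S (dx A) + S B * S (dy A) + S (dt A) =
      S (dt (Uhat U)) + S (Uhat U) * S (dx (Uhat U)) + ν • S (dy (dy A)))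
    (hcont : S (dx A) + S (dy B) = 0) :
    ∀ i k : ℕ, A i 3 k = ((k : ℝ) + 1) * A i 1 (k + 1) / (6 * ν) := by
  have hB1 : ∀ i k, B i 1 k = 0 := fun i k => by
    simpa [dx, dy, hA] using congrArg (coeff (exponent i 0 k)) hcont
  intro i k
  have hAdxA : coeff (exponent i 1 k) (S A * S (dx A)) = 0 :=
    coeff_exponent_y_one_S_mul_S_eq_zero _ _ i k (by simp [hA]) (by simp [dx, hA])
  have hBdyA : coeff (exponent i 1 k) (S B * S (dy A)) = 0 :=
    coeff_exponent_y_one_S_mul_S_eq_zero _ _ i k (by simp [hB]) (by simp [hB1])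
  have hUdxU : coeff (exponent i 1 k) (S (Uhat U) * S (dx (Uhat U))) = 0 :=
    coeff_exponent_y_one_S_mul_S_eq_zero _ _ i k (by simp [dx, Uhat]) (by simp [Uhat])
  have hcoeff := congrArg (coeff (exponent i 1 k)) hmom
  simp only [map_add, coeff_smul, hAdxA, hBdyA, hUdxU, coeff_exponent_S] at hcoeff
  norm_num [dt, dy, Uhat] at hcoeff
  field_simp
  linarith
end

section
/- Suppose ν ≠ 0 and u = S(A), v = S(B) satisfy both Prandtl's boundary-layer momentum equation u·∂ₓu + v·∂_yu + ∂_tu = ∂_tS(Û) + S(Û)·∂ₓS(Û) + ν·∂_y∂_yu and the continuity equation ∂ₓu + ∂_yv = 0 in MvPowerSeries (Fin 3) ℝ. Then for all i,k ∈ ℕ and all j ≥ 2: A(i,j+2,k) = (1/(ν·(j+1)(j+2)))·[(k+1)·A(i,j,k+1) + Σ_{p=0}^{i} Σ_{q=1}^{j−1} Σ_{r=0}^{k} (i−p+1)·A(p,q,r)·A(i−p+1,j−q,k−r) − Σ_{p=0}^{i} Σ_{q=2}^{j} Σ_{r=0}^{k} ((p+1)(j−q+1)/q)·A(p+1,q−1,r)·A(i−p,j−q+1,k−r)].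 -/
/-!
Read off the coefficient of `x^i y^j t^k` in the momentum equation. The external-flow terms
live at `y`-exponent `0`, so they vanish for `j ≥ 1`. The continuity equation expresses the
coefficients of `v` through those of `u`, `(q + 1) B(p, q + 1, r) = -(p + 1) A(p + 1, q, r)`,
and the vanishing of `A` and `B` at `y`-exponent `0` trims the Cauchy products to the stated
ranges. What remains is a linear equation for the viscous coefficient
`ν (j + 1) (j + 2) A(i, j + 2, k)`.
-/

open Finset

noncomputable def expTriple (i j k : ℕ) : Fin 3 →₀ ℕ :=
  Finsupp.equivFunOnFinite.symm ![i, j, k]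

@[simp] lemma expTriple_apply_zero (i j k : ℕ) : expTriple i j k 0 = i := rfl
@[simp] lemma expTriple_apply_one (i j k : ℕ) : expTriple i j k 1 = j := rfl
@[simp] lemma expTriple_apply_two (i j k : ℕ) : expTriple i j k 2 = k := rfl

lemma expTriple_apply_eq (m : Fin 3 →₀ ℕ) : expTriple (m 0) (m 1) (m 2) = m := by
  ext x; fin_cases x <;> rfl

@[simp] lemma coeff_S (A : ℕ → ℕ → ℕ → ℝ) (i j k : ℕ) :
    MvPowerSeries.coeff (expTriple i j k) (S A) = A i j k := rfl

lemma mem_antidiagonal_expTriple {i j k : ℕ} {x : (Fin 3 →₀ ℕ) × (Fin 3 →₀ ℕ)} :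
    x ∈ antidiagonal (expTriple i j k) ↔
      x.1 0 + x.2 0 = i ∧ x.1 1 + x.2 1 = j ∧ x.1 2 + x.2 2 = k := by
  rw [HasAntidiagonal.mem_antidiagonal, ← expTriple_apply_eq (x.1 + x.2)]
  simp only [Finsupp.coe_add, Pi.add_apply]
  constructor
  · intro h
    exact ⟨congrArg (· 0) h, congrArg (· 1) h, congrArg (· 2) h⟩
  · rintro ⟨h0, h1, h2⟩
    rw [h0, h1, h2]

lemma coeff_S_mul_S (A B : ℕ → ℕ → ℕ → ℝ) (i j k : ℕ) :
    MvPowerSeries.coeff (expTriple i j k) (S A * S B) =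
      ∑ p ∈ range (i + 1), ∑ q ∈ range (j + 1), ∑ r ∈ range (k + 1),
        A p q r * B (i - p) (j - q) (k - r) := by
  simp_rw [MvPowerSeries.coeff_mul, ← sum_product']
  refine sum_nbij' (fun x => (x.1 0, x.1 1, x.1 2))
    (fun y => (expTriple y.1 y.2.1 y.2.2, expTriple (i - y.1) (j - y.2.1) (k - y.2.2)))
    ?_ ?_ ?_ ?_ ?_
  · rintro x hx
    rw [mem_antidiagonal_expTriple] at hx
    simp only [mem_product, mem_range]
    omega
  · rintro ⟨p, q, r⟩ hy
    simp only [mem_product, mem_range] at hy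
    rw [mem_antidiagonal_expTriple]
    simp only [expTriple_apply_zero, expTriple_apply_one, expTriple_apply_two]
    omega
  · rintro ⟨a, b⟩ hx
    rw [mem_antidiagonal_expTriple] at hx
    obtain ⟨rfl, rfl, rfl⟩ := hx
    simp only [Nat.add_sub_cancel_left, expTriple_apply_eq]
  · rintro ⟨p, q, r⟩ -
    rfl
  · rintro ⟨a, b⟩ hx
    rw [mem_antidiagonal_expTriple] at hx
    obtain ⟨rfl, rfl, rfl⟩ := hx
    simp only [Nat.add_sub_cancel_left]
    rfl

section Prandtl

variable {A B : ℕ → ℕ → ℕ → ℝ}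

lemma B_succ_of_continuity (hcont : S (dx A) + S (dy B) = 0) (p q r : ℕ) :
    B p (q + 1) r = -(((p : ℝ) + 1) * A (p + 1) q r) / ((q : ℝ) + 1) := by
  have h := congrArg (MvPowerSeries.coeff (expTriple p q r)) hcont
  rw [map_add, map_zero, coeff_S, coeff_S] at h
  rw [eq_div_iff (by positivity)]
  simp only [dx, dy] at h
  linarith

lemma coeff_externalFlow_eq_zero (U : ℕ → ℕ → ℝ) {j : ℕ} (hj : j ≠ 0) (i k : ℕ) :
    MvPowerSeries.coeff (expTriple i j k)
      (S (dt (Uhat U)) + S (Uhat U) * S (dx (Uhat U))) = 0 := by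
  rw [map_add, coeff_S, coeff_S_mul_S]
  have hdt : dt (Uhat U) i j k = 0 := by simp [dt, Uhat, hj]
  have hprod : ∀ q ≤ j, ∀ p r, Uhat U p q r * dx (Uhat U) (i - p) (j - q) (k - r) = 0 := by
    intro q hq p r
    rcases Nat.eq_zero_or_pos q with rfl | hq0
    · simp [dx, Uhat, hj]
    · simp [Uhat, hq0.ne']
  rw [hdt, zero_add]
  exact sum_eq_zero fun p _ => sum_eq_zero fun q hq =>
    sum_eq_zero fun r _ => hprod q (Nat.lt_succ_iff.mp (mem_range.mp hq)) p r

lemma coeff_S_mul_S_dx (hA : ∀ i k, A i 0 k = 0) (i j k : ℕ) :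
    MvPowerSeries.coeff (expTriple i j k) (S A * S (dx A)) =
      ∑ p ∈ range (i + 1), ∑ q ∈ Icc 1 (j - 1), ∑ r ∈ range (k + 1),
        ((i - p + 1 : ℕ) : ℝ) * A p q r * A (i - p + 1) (j - q) (k - r) := by
  rw [coeff_S_mul_S]
  refine sum_congr rfl fun p _ => ?_
  have hsub : Icc 1 (j - 1) ⊆ range (j + 1) := fun q hq => by
    simp only [mem_Icc] at hq; simp only [mem_range]; omega
  rw [← sum_subset hsub]
  · refine sum_congr rfl fun q _ => sum_congr rfl fun r _ => ?_
    simp only [dx]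
    push_cast
    ring
  · intro q hq hq'
    simp only [mem_range] at hq
    simp only [mem_Icc] at hq'
    refine sum_eq_zero fun r _ => ?_
    obtain rfl | rfl : q = 0 ∨ q = j := by omega
    · simp [hA]
    · simp [dx, hA]

lemma coeff_S_mul_S_dy (hA : ∀ i k, A i 0 k = 0) (hB : ∀ i k, B i 0 k = 0)
    (hcont : S (dx A) + S (dy B) = 0) (i j k : ℕ) :
    MvPowerSeries.coeff (expTriple i j k) (S B * S (dy A)) =
      -∑ p ∈ range (i + 1), ∑ q ∈ Icc 2 j, ∑ r ∈ range (k + 1),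
        (((p : ℝ) + 1) * ((j - q + 1 : ℕ) : ℝ) / (q : ℝ))
          * A (p + 1) (q - 1) r * A (i - p) (j - q + 1) (k - r) := by
  rw [coeff_S_mul_S, ← sum_neg_distrib]
  refine sum_congr rfl fun p _ => ?_
  have hsub : Icc 2 j ⊆ range (j + 1) := fun q hq => by
    simp only [mem_Icc] at hq; simp only [mem_range]; omega
  rw [← sum_subset hsub, ← sum_neg_distrib]
  · refine sum_congr rfl fun q hq => ?_
    obtain ⟨q, rfl⟩ : ∃ q', q = q' + 1 := ⟨q - 1, by simp only [mem_Icc] at hq; omega⟩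
    rw [← sum_neg_distrib]
    refine sum_congr rfl fun r _ => ?_
    rw [B_succ_of_continuity hcont]
    simp only [dy, Nat.add_sub_cancel, Nat.cast_add, Nat.cast_one]
    ring
  · intro q hq hq'
    simp only [mem_range] at hq
    simp only [mem_Icc] at hq'
    refine sum_eq_zero fun r _ => ?_
    obtain rfl | rfl : q = 0 ∨ q = 1 := by omega
    · simp [hB]
    · simp [B_succ_of_continuity hcont p 0 r, hA]

end Prandtl

theorem prandtl_A_recursion (ν : ℝ) (hν : ν ≠ 0) (U : ℕ → ℕ → ℝ)
    (A B : ℕ → ℕ → ℕ → ℝ)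
    (hA : ∀ i k : ℕ, A i 0 k = 0) (hB : ∀ i k : ℕ, B i 0 k = 0)
    (hmom : S A * S (dx A) + S B * S (dy A) + S (dt A) =
      S (dt (Uhat U)) + S (Uhat U) * S (dx (Uhat U)) + ν • S (dy (dy A)))
    (hcont : S (dx A) + S (dy B) = 0) :
    ∀ i k j : ℕ, 2 ≤ j →
      A i (j + 2) k =
        (1 / (ν * ((j : ℝ) + 1) * ((j : ℝ) + 2)))
          * (((k : ℝ) + 1) * A i j (k + 1)
            + (∑ p ∈ Finset.range (i + 1), ∑ q ∈ Finset.Icc 1 (j - 1),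
                ∑ r ∈ Finset.range (k + 1),
                ((i - p + 1 : ℕ) : ℝ) * A p q r * A (i - p + 1) (j - q) (k - r))
            - (∑ p ∈ Finset.range (i + 1), ∑ q ∈ Finset.Icc 2 j,
                ∑ r ∈ Finset.range (k + 1),
                (((p : ℝ) + 1) * ((j - q + 1 : ℕ) : ℝ) / (q : ℝ))
                  * A (p + 1) (q - 1) r * A (i - p) (j - q + 1) (k - r))) := by
  intro i k j hj
  have hm := congrArg (MvPowerSeries.coeff (expTriple i j k)) hmom
  rw [map_add, map_add (MvPowerSeries.coeff _) (_ + _), coeff_externalFlow_eq_zero U (by omega),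
    map_add, coeff_S_mul_S_dx hA, coeff_S_mul_S_dy hA hB hcont, map_smul, coeff_S, coeff_S,
    smul_eq_mul] at hm
  simp only [dt, dy] at hm
  rw [one_div_mul_eq_div, eq_div_iff (by positivity)]
  push_cast at hm ⊢
  linear_combination -hm
end

section
/- Fix ν ∈ ℝ with ν ≠ 0, a family U : ℕ² → ℝ of external-flow coefficients, and an arbitrary family a : ℕ² → ℝ. Then there exists exactly one pair of families A, B : ℕ³ → ℝ satisfying A(i,0,k) = B(i,0,k) = 0 and A(i,1,k) = a(i,k) for all i,k ∈ ℕ, such that u = S(A) and v = S(B) satisfy both Prandtl's boundary-layer momentum equation u·∂ₓu + v·∂_yu + ∂_tu = ∂_tS(Û) + S(Û)·∂ₓS(Û) + ν·∂_y∂_yu and the continuity equation ∂ₓu + ∂_yv = 0 in MvPowerSeries (Fin 3) ℝ. -/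
/-!
Comparing coefficients of `y ^ j`: the continuity equation together with `v = 0` at `y = 0`
expresses `B` through `A`, and the momentum equation reads `ν (j + 1) (j + 2) A(·, j + 2, ·) = …`,
where the right-hand side only involves the slices `A(·, j', ·)` with `j' ≤ j + 1`, because the
convective terms modulo `y ^ (j + 1)` only depend on `u` modulo `y ^ (j + 2)`. As `ν ≠ 0`, the
`y`-slices of `A` are therefore defined by a well-founded recursion starting from
`A(·, 0, ·) = 0` and `A(·, 1, ·) = a`, which has exactly one solution.
-/

open Function MvPowerSeries

theorem existsUnique_forall_eq_of_wellFoundedLT {α X : Type*} [LT α] [WellFoundedLT α]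
    [Nonempty X] (G : α → (α → X) → X)
    (hG : ∀ a f g, (∀ b < a, f b = g b) → G a f = G a g) :
    ∃! f : α → X, ∀ a, f a = G a f := by
  classical
  let f : α → X := wellFounded_lt.fix fun a rec ↦
    G a fun b ↦ if h : b < a then rec b h else Classical.arbitrary X
  have hf : ∀ a, f a = G a f := fun a ↦
    (wellFounded_lt.fix_eq _ a).trans (hG a _ _ fun b hb ↦ dif_pos hb)
  refine ⟨f, hf, fun g hg ↦ funext fun a ↦ ?_⟩
  induction a using WellFoundedLT.induction with
  | _ a ih => rw [hg, hf, hG a g f ih]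

theorem MvPowerSeries.smodEq_span_X_pow_iff {σ R : Type*} [CommRing R] {s : σ} {n : ℕ}
    {p q : MvPowerSeries σ R} :
    p ≡ q [SMOD Ideal.span {X s ^ n}] ↔ ∀ m : σ →₀ ℕ, m s < n → coeff m p = coeff m q := by
  simp only [SModEq.sub_mem, Ideal.mem_span_singleton, X_pow_dvd_iff, map_sub, sub_eq_zero]

namespace Prandtl

noncomputable def expVec (i j k : ℕ) : Fin 3 →₀ ℕ := Finsupp.equivFunOnFinite.symm ![i, j, k]

theorem expVec_eta (m : Fin 3 →₀ ℕ) : expVec (m 0) (m 1) (m 2) = m := by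
  ext x; fin_cases x <;> rfl

theorem forall_expVec {P : (Fin 3 →₀ ℕ) → Prop} : (∀ m, P m) ↔ ∀ i j k, P (expVec i j k) :=
  ⟨fun h _ _ _ ↦ h _, fun h m ↦ expVec_eta m ▸ h _ _ _⟩

theorem coeff_expVec_S (A : ℕ → ℕ → ℕ → ℝ) (i j k : ℕ) :
    coeff (expVec i j k) (S A) = A i j k :=
  rfl

noncomputable abbrev yPowIdeal (n : ℕ) : Ideal (MvPowerSeries (Fin 3) ℝ) :=
  Ideal.span {X 1 ^ n}

theorem S_smodEq_iff {n : ℕ} {A A' : ℕ → ℕ → ℕ → ℝ} :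
    S A ≡ S A' [SMOD yPowIdeal n] ↔ ∀ i j k, j < n → A i j k = A' i j k := by
  rw [smodEq_span_X_pow_iff, forall_expVec]
  rfl

variable {n : ℕ} {A A' : ℕ → ℕ → ℕ → ℝ}

theorem S_dx_smodEq (h : S A ≡ S A' [SMOD yPowIdeal n]) :
    S (dx A) ≡ S (dx A') [SMOD yPowIdeal n] := by
  rw [S_smodEq_iff] at h ⊢
  intro i j k hj
  simp only [dx, h _ _ _ hj]

theorem S_dt_smodEq (h : S A ≡ S A' [SMOD yPowIdeal n]) :
    S (dt A) ≡ S (dt A') [SMOD yPowIdeal n] := by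
  rw [S_smodEq_iff] at h ⊢
  intro i j k hj
  simp only [dt, h _ _ _ hj]

theorem S_dy_smodEq (h : S A ≡ S A' [SMOD yPowIdeal (n + 1)]) :
    S (dy A) ≡ S (dy A') [SMOD yPowIdeal n] := by
  rw [S_smodEq_iff] at h ⊢
  intro i j k hj
  simp only [dy, h _ _ _ (Nat.succ_lt_succ hj)]

/-- The coefficients of `v` forced by the continuity equation `∂ₓu + ∂_y v = 0` and `v = 0`
at `y = 0`. -/
noncomputable def vOfU (A : ℕ → ℕ → ℕ → ℝ) : ℕ → ℕ → ℕ → ℝ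
  | _, 0, _ => 0
  | i, j + 1, k => -(((i : ℝ) + 1) / ((j : ℝ) + 1)) * A (i + 1) j k

theorem S_vOfU_smodEq (h : S A ≡ S A' [SMOD yPowIdeal n]) :
    S (vOfU A) ≡ S (vOfU A') [SMOD yPowIdeal (n + 1)] := by
  rw [S_smodEq_iff] at h ⊢
  rintro i (_ | j) k hj
  · rfl
  · simp only [vOfU, h _ _ _ (Nat.succ_lt_succ_iff.1 hj)]

theorem continuity_iff_eq_vOfU (A B : ℕ → ℕ → ℕ → ℝ) :
    ((∀ i k, B i 0 k = 0) ∧ S (dx A) + S (dy B) = 0) ↔ B = vOfU A := by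
  have hcoeff : S (dx A) + S (dy B) = 0 ↔ ∀ i j k, B i (j + 1) k = vOfU A i (j + 1) k := by
    rw [MvPowerSeries.ext_iff, forall_expVec]
    refine forall₃_congr fun i j k ↦ ?_
    simp only [map_add, coeff_expVec_S, map_zero, dx, dy, vOfU]
    constructor <;> intro h <;> field_simp at h ⊢ <;> linarith
  rw [hcoeff]
  constructor
  · rintro ⟨h0, h⟩
    funext i j k
    cases j with
    | zero => exact h0 i k
    | succ j => exact h i j k
  · rintro rfl
    exact ⟨fun _ _ ↦ rfl, fun _ _ _ ↦ rfl⟩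

variable (ν : ℝ) (U a : ℕ → ℕ → ℝ)

/-- Prandtl's momentum equation reads `momentumResidual U A B = ν • ∂_y∂_y S A`. -/
noncomputable def momentumResidual (A B : ℕ → ℕ → ℕ → ℝ) : MvPowerSeries (Fin 3) ℝ :=
  S A * S (dx A) + S B * S (dy A) + S (dt A) - (S (dt (Uhat U)) + S (Uhat U) * S (dx (Uhat U)))

theorem momentumResidual_smodEq (h : S A ≡ S A' [SMOD yPowIdeal (n + 1)]) :
    momentumResidual U A (vOfU A) ≡ momentumResidual U A' (vOfU A') [SMOD yPowIdeal n] := by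
  have hle : yPowIdeal (n + 1) ≤ yPowIdeal n :=
    Ideal.span_singleton_le_span_singleton.2 (pow_dvd_pow _ n.le_succ)
  have h' := h.mono hle
  have hv := (S_vOfU_smodEq h').mono hle
  exact (((h'.mul (S_dx_smodEq h')).add (hv.mul (S_dy_smodEq h))).add (S_dt_smodEq h')).sub
    SModEq.rfl

theorem momentum_iff (hν : ν ≠ 0) (A B : ℕ → ℕ → ℕ → ℝ) :
    (S A * S (dx A) + S B * S (dy A) + S (dt A) =
        S (dt (Uhat U)) + S (Uhat U) * S (dx (Uhat U)) + ν • S (dy (dy A))) ↔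
      ∀ i j k, A i (j + 2) k =
        coeff (expVec i j k) (momentumResidual U A B) / (ν * (((j : ℝ) + 1) * ((j : ℝ) + 2))) := by
  rw [← sub_eq_iff_eq_add', ← momentumResidual, MvPowerSeries.ext_iff, forall_expVec]
  refine forall₃_congr fun i j k ↦ ?_
  have hj : ν * (((j : ℝ) + 1) * ((j : ℝ) + 2)) ≠ 0 := by positivity
  have hdyy : ν * dy (dy A) i j k = A i (j + 2) k * (ν * (((j : ℝ) + 1) * ((j : ℝ) + 2))) := by
    simp only [dy]
    push_cast
    ring
  rw [coeff_smul, coeff_expVec_S, hdyy, eq_div_iff hj, eq_comm]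

/-- Recursion for the `y`-slices `swap A j = fun i k ↦ A i j k` of a solution: slice `j + 2` is
read off from the coefficient of `y ^ j` in the momentum equation. -/
noncomputable def sliceRec : ℕ → (ℕ → ℕ → ℕ → ℝ) → ℕ → ℕ → ℝ
  | 0, _ => 0
  | 1, _ => a
  | j + 2, f => fun i k ↦
    coeff (expVec i j k) (momentumResidual U (swap f) (vOfU (swap f))) /
      (ν * (((j : ℝ) + 1) * ((j : ℝ) + 2)))

theorem sliceRec_congr (n : ℕ) (f g : ℕ → ℕ → ℕ → ℝ) (h : ∀ m < n, f m = g m) :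
    sliceRec ν U a n f = sliceRec ν U a n g := by
  match n with
  | 0 | 1 => rfl
  | j + 2 =>
    have hfg : S (swap f) ≡ S (swap g) [SMOD yPowIdeal (j + 1 + 1)] :=
      S_smodEq_iff.2 fun i m k hm ↦ congrFun₂ (h m hm) i k
    funext i k
    simp only [sliceRec]
    rw [smodEq_span_X_pow_iff.1 (momentumResidual_smodEq U hfg) (expVec i j k) j.lt_succ_self]

theorem boundary_momentum_iff (hν : ν ≠ 0) (A : ℕ → ℕ → ℕ → ℝ) :
    ((∀ i k, A i 0 k = 0) ∧ (∀ i k, A i 1 k = a i k) ∧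
      S A * S (dx A) + S (vOfU A) * S (dy A) + S (dt A) =
        S (dt (Uhat U)) + S (Uhat U) * S (dx (Uhat U)) + ν • S (dy (dy A))) ↔
      ∀ j, swap A j = sliceRec ν U a j (swap A) := by
  rw [momentum_iff ν U hν]
  constructor
  · rintro ⟨h0, h1, h⟩ (_ | _ | j) <;> funext i k
    exacts [h0 i k, h1 i k, h i j k]
  · intro h
    exact ⟨fun i k ↦ congrFun₂ (h 0) i k, fun i k ↦ congrFun₂ (h 1) i k,
      fun i j k ↦ congrFun₂ (h (j + 2)) i k⟩

def IsSolution (A B : ℕ → ℕ → ℕ → ℝ) : Prop :=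
  (∀ i k : ℕ, A i 0 k = 0) ∧ (∀ i k : ℕ, B i 0 k = 0) ∧
    (∀ i k : ℕ, A i 1 k = a i k) ∧
    (S A * S (dx A) + S B * S (dy A) + S (dt A) =
      S (dt (Uhat U)) + S (Uhat U) * S (dx (Uhat U)) + ν • S (dy (dy A))) ∧
    (S (dx A) + S (dy B) = 0)

theorem isSolution_iff (hν : ν ≠ 0) (A B : ℕ → ℕ → ℕ → ℝ) :
    IsSolution ν U a A B ↔ B = vOfU A ∧ ∀ j, swap A j = sliceRec ν U a j (swap A) := by
  rw [← boundary_momentum_iff ν U a hν, ← continuity_iff_eq_vOfU]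
  constructor
  · rintro ⟨hA0, hB0, hA1, hmom, hcont⟩
    obtain rfl := (continuity_iff_eq_vOfU A B).1 ⟨hB0, hcont⟩
    exact ⟨⟨hB0, hcont⟩, hA0, hA1, hmom⟩
  · rintro ⟨hB, hA0, hA1, hmom⟩
    obtain rfl := (continuity_iff_eq_vOfU A B).1 hB
    exact ⟨hA0, hB.1, hA1, hmom, hB.2⟩

end Prandtl

open Prandtl in
theorem prandtl_existsUnique (ν : ℝ) (hν : ν ≠ 0) (U : ℕ → ℕ → ℝ) (a : ℕ → ℕ → ℝ) :
    ∃! AB : (ℕ → ℕ → ℕ → ℝ) × (ℕ → ℕ → ℕ → ℝ),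
      (∀ i k : ℕ, AB.1 i 0 k = 0) ∧ (∀ i k : ℕ, AB.2 i 0 k = 0) ∧
      (∀ i k : ℕ, AB.1 i 1 k = a i k) ∧
      (S AB.1 * S (dx AB.1) + S AB.2 * S (dy AB.1) + S (dt AB.1) =
        S (dt (Uhat U)) + S (Uhat U) * S (dx (Uhat U)) + ν • S (dy (dy AB.1))) ∧
      (S (dx AB.1) + S (dy AB.2) = 0) := by
  obtain ⟨f, hf, hf_unique⟩ :=
    existsUnique_forall_eq_of_wellFoundedLT (sliceRec ν U a) (sliceRec_congr ν U a)
  refine ⟨(swap f, vOfU (swap f)), (isSolution_iff ν U a hν _ _).2 ⟨rfl, hf⟩, ?_⟩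
  rintro ⟨A, B⟩ h
  obtain ⟨rfl, hA⟩ := (isSolution_iff ν U a hν A B).1 h
  obtain rfl : swap A = f := hf_unique _ hA
  rfl
end
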